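/- There exists a universal constant C > 0 with the following property: for every point x₀ ∈ ℝ⁴, every radius ρ > 0, and every positive C² function v on the open Euclidean ball B(x₀, ρ) ⊂ ℝ⁴ satisfying the differential inequality Δv ≥ 2v³ on B(x₀, ρ), one has v(x₀)·ρ ≤ C. (This is the Euclidean model of Step 1 in the paper's boundary blow-up analysis: the rescaled conformal factors v̄ᵢ satisfy −Δv̄ᵢ + (R/6)·v̄ᵢ = −2v̄ᵢ³ with scalar curvature R ≥ 0, hence Δv̄ᵢ ≥ 2v̄ᵢ³, and the cut-off maximum-principle argument at a maximum point of v·r·η yields the bound v(x)·dist(x, ∂X) ≤ C.) -/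

import Mathlib

/-!
Compare `v` with `w x = 2r / (r² - ‖x - x₀‖²)`, the conformal factor of the hyperbolic metric on
`B(x₀, r)`: in `ℝ⁴` it solves `Δw = 2w³` exactly, and it blows up on `∂B(x₀, r)`. If
`v x₀ * r > 2 = w x₀ * r`, then `v - w` is positive at `x₀` and very negative near the boundary, so
it has an interior maximum `z` with `v z > w z`. There the Hessian of `v - w` is negative
semidefinite, whence `2 v³ ≤ Δv ≤ Δw = 2 w³` at `z`, a contradiction. So `v x₀ * r ≤ 2` for all
`r < ρ`, and `C = 2` works.
-/

/-- The Euclidean Laplacian on `ℝ⁴`: the sum of the pure second partial derivatives. -/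
noncomputable def lap (v : EuclideanSpace ℝ (Fin 4) → ℝ) (x : EuclideanSpace ℝ (Fin 4)) : ℝ :=
  ∑ i : Fin 4,
    iteratedFDeriv ℝ 2 v x ![EuclideanSpace.single i (1 : ℝ), EuclideanSpace.single i (1 : ℝ)]

open Filter Metric Set
open scoped Topology

theorem IsLocalMax.deriv_deriv_nonpos {f : ℝ → ℝ} {a : ℝ} (h : IsLocalMax f a)
    (hf : ContinuousAt f a) : deriv (deriv f) a ≤ 0 := by
  by_contra! hpos
  have hconst : f =ᶠ[𝓝 a] fun _ => f a :=
    ((isLocalMin_of_deriv_deriv_pos hpos h.deriv_eq_zero hf).and h).mono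
      fun x hx => le_antisymm hx.2 hx.1
  have hderiv : deriv f =ᶠ[𝓝 a] fun _ => 0 := by
    filter_upwards [hconst.eventuallyEq_nhds] with x hx
    rw [hx.deriv_eq, deriv_const]
  rw [hderiv.deriv_eq, deriv_const] at hpos
  exact hpos.false

theorem iteratedDeriv_two_comp_add_smul {E : Type*} [NormedAddCommGroup E] [NormedSpace ℝ E]
    {f : E → ℝ} {x : E} (hf : ContDiffAt ℝ 2 f x) (e : E) :
    iteratedDeriv 2 (fun t : ℝ => f (x + t • e)) 0 = iteratedFDeriv ℝ 2 f x ![e, e] := by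
  have hderiv : deriv (fun t : ℝ => x + t • e) = fun _ => e :=
    funext fun t => by simpa using (((hasDerivAt_id t).smul_const e).const_add x).deriv
  have hcomp := iteratedDeriv_vcomp_two (f := fun t : ℝ => x + t • e) (x := 0)
    (by simpa using hf) (by fun_prop)
  have hpair : ![e, e] = fun _ => e := by ext i; fin_cases i <;> rfl
  simp only [iteratedDeriv_succ, iteratedDeriv_zero, hderiv, deriv_const, map_zero, add_zero,
    zero_smul] at hcomp
  rwa [iteratedDeriv_succ, iteratedDeriv_one, hpair]

theorem IsLocalMax.iteratedFDeriv_two_nonpos {E : Type*} [NormedAddCommGroup E]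
    [NormedSpace ℝ E] {f : E → ℝ} {x : E} (h : IsLocalMax f x) (hf : ContDiffAt ℝ 2 f x)
    (e : E) : iteratedFDeriv ℝ 2 f x ![e, e] ≤ 0 := by
  have hline : Continuous fun t : ℝ => x + t • e := by fun_prop
  have hmax : IsLocalMax (fun t : ℝ => f (x + t • e)) 0 :=
    IsLocalMax.comp_continuous (g := fun t : ℝ => x + t • e) (by simpa using h) hline.continuousAt
  rw [← iteratedDeriv_two_comp_add_smul hf, iteratedDeriv_succ, iteratedDeriv_one]
  exact hmax.deriv_deriv_nonpos (hf.continuousAt.comp_of_eq hline.continuousAt (by simp))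

theorem lap_le_of_isLocalMax_sub {v w : EuclideanSpace ℝ (Fin 4) → ℝ}
    {z : EuclideanSpace ℝ (Fin 4)} (hv : ContDiffAt ℝ 2 v z) (hw : ContDiffAt ℝ 2 w z)
    (h : IsLocalMax (v - w) z) : lap v z ≤ lap w z := by
  refine Finset.sum_le_sum fun i _ => ?_
  have hi := h.iteratedFDeriv_two_nonpos (hv.sub hw) (EuclideanSpace.single i 1)
  rw [iteratedFDeriv_sub_apply hv hw] at hi
  simpa using hi

theorem iteratedDeriv_two_div_quadratic {a b c : ℝ} (hc : c ≠ 0) :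
    iteratedDeriv 2 (fun t => a / (c - 2 * b * t - t ^ 2)) 0 =
      2 * a / c ^ 2 + 8 * a * b ^ 2 / c ^ 3 := by
  have hD (t : ℝ) : HasDerivAt (fun t => c - 2 * b * t - t ^ 2) (-(2 * b) - 2 * t) t :=
    ((((hasDerivAt_id t).const_mul (2 * b)).const_sub c).sub (hasDerivAt_pow 2 t)).congr_deriv
      (by ring)
  have hne : ∀ᶠ t in 𝓝 0, c - 2 * b * t - t ^ 2 ≠ 0 :=
    (hD 0).continuousAt.eventually_ne (by simpa using hc)
  have hfirst : deriv (fun t => a / (c - 2 * b * t - t ^ 2)) =ᶠ[𝓝 0]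
      fun t => a * (2 * b + 2 * t) / (c - 2 * b * t - t ^ 2) ^ 2 := by
    filter_upwards [hne] with t ht
    exact ((hasDerivAt_const t a).div (hD t) ht).deriv.trans (by ring)
  have hN : HasDerivAt (fun t : ℝ => a * (2 * b + 2 * t)) (a * 2) 0 :=
    ((((hasDerivAt_id (0 : ℝ)).const_mul 2).const_add (2 * b)).const_mul a).congr_deriv (by ring)
  have hsecond := hN.div ((hD 0).pow 2) (by simpa using hc)
  rw [iteratedDeriv_succ, iteratedDeriv_one, hfirst.deriv_eq]
  refine hsecond.deriv.trans ?_
  norm_num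
  field_simp
  ring

section Barrier

variable {E : Type*} [NormedAddCommGroup E] {x₀ x : E} {r : ℝ}

noncomputable def barrier (x₀ : E) (r : ℝ) (x : E) : ℝ :=
  2 * r / (r ^ 2 - ‖x - x₀‖ ^ 2)

theorem barrier_self (x₀ : E) (r : ℝ) : barrier x₀ r x₀ = 2 / r := by
  rcases eq_or_ne r 0 with rfl | hr
  · simp [barrier]
  · rw [barrier, sub_self, norm_zero, zero_pow two_ne_zero, sub_zero]
    field_simp

theorem continuousOn_barrier (x₀ : E) (r : ℝ) : ContinuousOn (barrier x₀ r) (ball x₀ r) :=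
  continuousOn_const.div (by fun_prop) fun x hx => by
    have := mem_ball_iff_norm.1 hx
    nlinarith [norm_nonneg (x - x₀)]

theorem exists_barrier_eq_on_sphere (x₀ : E) {m : ℝ} (hr : 0 < r) (hm : 2 / r < m) :
    ∃ s, 0 < s ∧ s < r ∧ ∀ x ∈ sphere x₀ s, barrier x₀ r x = m := by
  have hm₀ : 0 < m := (div_pos two_pos hr).trans hm
  have hδ₀ : 0 < 2 * r / m := by positivity
  have hδ : 2 * r / m < r ^ 2 := by
    rw [div_lt_iff₀ hm₀]
    rw [div_lt_iff₀ hr] at hm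
    nlinarith
  refine ⟨√(r ^ 2 - 2 * r / m), Real.sqrt_pos.2 (by linarith), (Real.sqrt_lt' hr).2 (by linarith),
    fun x hx => ?_⟩
  rw [mem_sphere, dist_eq_norm] at hx
  rw [barrier, hx, Real.sq_sqrt (by linarith)]
  field_simp
  ring

theorem exists_isLocalMax_sub_barrier [ProperSpace E] {v : E → ℝ} (hr : 0 < r)
    (hv : ContinuousOn v (closedBall x₀ r)) (hv₀ : 2 / r < v x₀) :
    ∃ z, ‖z - x₀‖ < r ∧ IsLocalMax (v - barrier x₀ r) z ∧
      v x₀ - 2 / r ≤ v z - barrier x₀ r z := by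
  have hx₀ : x₀ ∈ closedBall x₀ r := mem_closedBall_self hr.le
  obtain ⟨xm, -, hxm⟩ := (isCompact_closedBall x₀ r).exists_isMaxOn ⟨x₀, hx₀⟩ hv
  have hvm : 2 / r < v xm := hv₀.trans_le (hxm hx₀)
  -- On this sphere `v - barrier ≤ -2 / r < v x₀ - 2 / r`.
  obtain ⟨s, hs, hsr, hsphere⟩ :=
    exists_barrier_eq_on_sphere x₀ hr (m := v xm + 2 / r) (by linarith [div_pos two_pos hr])
  have hsub : closedBall x₀ s ⊆ closedBall x₀ r := closedBall_subset_closedBall hsr.le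
  have hcont : ContinuousOn (v - barrier x₀ r) (closedBall x₀ s) :=
    (hv.mono hsub).sub ((continuousOn_barrier x₀ r).mono (closedBall_subset_ball hsr))
  obtain ⟨z, hz, hzmax⟩ := (isCompact_closedBall x₀ s).exists_isMaxOn_mem_subset hcont
    (mem_closedBall_self hs.le) fun x hx => by
      rw [closedBall_sdiff_ball] at hx
      have hvx : v x ≤ v xm := hxm (hsub (sphere_subset_closedBall hx))
      simp only [Pi.sub_apply, hsphere x hx, barrier_self]
      linarith [div_pos two_pos hr]
  refine ⟨z, (mem_ball_iff_norm.1 hz).trans hsr,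
    hzmax.isLocalMax (mem_of_superset (isOpen_ball.mem_nhds hz) ball_subset_closedBall), ?_⟩
  simpa [barrier_self] using hzmax (mem_closedBall_self hs.le)

variable [InnerProductSpace ℝ E]

theorem contDiffAt_barrier {n : WithTop ℕ∞} (hx : ‖x - x₀‖ < r) :
    ContDiffAt ℝ n (barrier x₀ r) x := by
  have : r ^ 2 - ‖x - x₀‖ ^ 2 ≠ 0 := by nlinarith [norm_nonneg (x - x₀)]
  have hnorm : ContDiffAt ℝ n (fun y => ‖y - x₀‖ ^ 2) x :=
    ((contDiff_norm_sq ℝ).comp (contDiff_id.sub contDiff_const)).contDiffAt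
  exact contDiffAt_const.div (contDiffAt_const.sub hnorm) this

open scoped RealInnerProductSpace

theorem barrier_add_smul {e : E} (he : ‖e‖ = 1) (t : ℝ) :
    barrier x₀ r (x + t • e) =
      2 * r / ((r ^ 2 - ‖x - x₀‖ ^ 2) - 2 * ⟪x - x₀, e⟫ * t - t ^ 2) := by
  rw [barrier, show x + t • e - x₀ = (x - x₀) + t • e by abel, norm_add_sq_real,
    real_inner_smul_right, norm_smul, he, Real.norm_eq_abs, mul_one, sq_abs]
  ring_nf

theorem iteratedFDeriv_two_barrier {e : E} (hx : ‖x - x₀‖ < r) (he : ‖e‖ = 1) :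
    iteratedFDeriv ℝ 2 (barrier x₀ r) x ![e, e] =
      4 * r / (r ^ 2 - ‖x - x₀‖ ^ 2) ^ 2 +
        16 * r * ⟪x - x₀, e⟫ ^ 2 / (r ^ 2 - ‖x - x₀‖ ^ 2) ^ 3 := by
  have hc : r ^ 2 - ‖x - x₀‖ ^ 2 ≠ 0 := by nlinarith [norm_nonneg (x - x₀)]
  rw [← iteratedDeriv_two_comp_add_smul (contDiffAt_barrier hx) e]
  simp_rw [barrier_add_smul he]
  rw [iteratedDeriv_two_div_quadratic hc]
  ring

end Barrier

theorem lap_barrier {x₀ x : EuclideanSpace ℝ (Fin 4)} {r : ℝ} (hx : ‖x - x₀‖ < r) :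
    lap (barrier x₀ r) x = 2 * barrier x₀ r x ^ 3 := by
  have hc : r ^ 2 - ‖x - x₀‖ ^ 2 ≠ 0 := by nlinarith [norm_nonneg (x - x₀)]
  have hsq : ∑ i, (x - x₀) i ^ 2 = ‖x - x₀‖ ^ 2 := by simp [EuclideanSpace.norm_sq_eq]
  have hterm (i : Fin 4) :
      iteratedFDeriv ℝ 2 (barrier x₀ r) x ![EuclideanSpace.single i 1, EuclideanSpace.single i 1] =
        4 * r / (r ^ 2 - ‖x - x₀‖ ^ 2) ^ 2 +
          16 * r / (r ^ 2 - ‖x - x₀‖ ^ 2) ^ 3 * (x - x₀) i ^ 2 := by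
    rw [iteratedFDeriv_two_barrier hx (by simp), EuclideanSpace.inner_single_right]
    simp only [one_mul, conj_trivial]
    ring
  rw [lap, Finset.sum_congr rfl fun i _ => hterm i, Finset.sum_add_distrib, ← Finset.mul_sum, hsq,
    Finset.sum_const, Finset.card_univ, Fintype.card_fin, nsmul_eq_mul, barrier,
    show ‖x - x₀‖ ^ 2 = r ^ 2 - (r ^ 2 - ‖x - x₀‖ ^ 2) by ring]
  generalize r ^ 2 - ‖x - x₀‖ ^ 2 = c at hc ⊢
  field_simp
  ring

theorem mul_le_two_of_pow_three_le_lap {x₀ : EuclideanSpace ℝ (Fin 4)} {r ρ : ℝ}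
    {v : EuclideanSpace ℝ (Fin 4) → ℝ} (hr : 0 < r) (hrρ : r < ρ)
    (hv : ContDiffOn ℝ 2 v (ball x₀ ρ)) (hlap : ∀ x ∈ ball x₀ ρ, 2 * v x ^ 3 ≤ lap v x) :
    v x₀ * r ≤ 2 := by
  by_contra! hbig
  have hv₀ : 2 / r < v x₀ := by rwa [div_lt_iff₀ hr]
  have hball : closedBall x₀ r ⊆ ball x₀ ρ := closedBall_subset_ball hrρ
  obtain ⟨z, hzr, hzmax, hz⟩ := exists_isLocalMax_sub_barrier hr (hv.continuousOn.mono hball) hv₀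
  have hzρ : z ∈ ball x₀ ρ := hball (mem_closedBall_iff_norm.2 hzr.le)
  have hcomp := lap_le_of_isLocalMax_sub (hv.contDiffAt (isOpen_ball.mem_nhds hzρ))
    (contDiffAt_barrier hzr) hzmax
  rw [lap_barrier hzr] at hcomp
  have hvz : v z ≤ barrier x₀ r z :=
    (Odd.pow_le_pow (by decide : Odd 3)).1 (by linarith [hlap z hzρ])
  linarith

/-- **Maximum-principle bound (Euclidean model of Step 1 of the boundary blow-up
analysis).** There is a universal constant `C > 0` such that every positive `C²`
function `v` on a ball `B(x₀, ρ) ⊆ ℝ⁴` satisfying `Δv ≥ 2v³` there obeys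
`v(x₀)·ρ ≤ C`. -/
theorem maximum_principle_bound : ∃ C : ℝ, 0 < C ∧
    ∀ (x₀ : EuclideanSpace ℝ (Fin 4)) (ρ : ℝ) (v : EuclideanSpace ℝ (Fin 4) → ℝ),
      0 < ρ →
      ContDiffOn ℝ 2 v (Metric.ball x₀ ρ) →
      (∀ x ∈ Metric.ball x₀ ρ, 0 < v x) →
      (∀ x ∈ Metric.ball x₀ ρ, 2 * (v x) ^ 3 ≤ lap v x) →
      v x₀ * ρ ≤ C := by
  refine ⟨2, two_pos, fun x₀ ρ v hρ hv _ hlap => ?_⟩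
  refine le_of_tendsto ((continuous_const_mul (v x₀)).tendsto ρ |>.mono_left nhdsWithin_le_nhds)
    (?_ : ∀ᶠ r in 𝓝[<] ρ, v x₀ * r ≤ 2)
  filter_upwards [Ioo_mem_nhdsLT hρ] with r hr
  exact mul_le_two_of_pow_three_le_lap hr.1 hr.2 hv hlap
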